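/- arXiv:math-ph/0308006 — 2 statements merged into one kernel-verified Lean document; each statement's English description precedes it below -/
import Mathlib

section
/- Let M be an n×n real matrix (n > 1) with non-negative entries such that M^k has strictly positive entries for some k ≥ 1. If M has two entrywise non-negative eigenvectors v and w (both nonzero), then v and w are scalar multiples of each other. -/
lemma pow_mulVec_eig {n : ℕ} (M : Matrix (Fin n) (Fin n) ℝ) (v : Fin n → ℝ) (μ : ℝ)
    (h : M.mulVec v = μ • v) (k : ℕ) : (M ^ k).mulVec v = μ ^ k • v := by
  induction k with
  | zero => simp [Matrix.one_mulVec]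
  | succ j ih =>
    rw [pow_succ, ← Matrix.mulVec_mulVec, h, Matrix.mulVec_smul, ih, smul_smul, pow_succ, mul_comm μ]

lemma mulVec_pos' {n : ℕ} (A : Matrix (Fin n) (Fin n) ℝ) (hA : ∀ i j, 0 < A i j)
    (u : Fin n → ℝ) (hu0 : ∀ i, 0 ≤ u i) (j0 : Fin n) (hj0 : 0 < u j0) (i : Fin n) :
    0 < A.mulVec u i := by
  simp only [Matrix.mulVec, dotProduct]
  apply Finset.sum_pos'
  · intro j _; exact mul_nonneg (hA i j).le (hu0 j)
  · exact ⟨j0, Finset.mem_univ _, mul_pos (hA i j0) hj0⟩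

lemma exists_ne_zero_of_ne_zero {n : ℕ} {v : Fin n → ℝ} (hv : v ≠ 0) (hv0 : ∀ i, 0 ≤ v i) :
    ∃ j, 0 < v j := by
  by_contra h
  push_neg at h
  exact hv (funext fun i => le_antisymm (h i) (hv0 i))

lemma all_pos {n : ℕ} (A : Matrix (Fin n) (Fin n) ℝ) (hA : ∀ i j, 0 < A i j)
    {v : Fin n → ℝ} {a : ℝ} (hAv : A.mulVec v = a • v)
    (hv : v ≠ 0) (hv0 : ∀ i, 0 ≤ v i) : 0 < a ∧ ∀ i, 0 < v i := by
  obtain ⟨j0, hj0⟩ := exists_ne_zero_of_ne_zero hv hv0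
  have h1 : ∀ i, 0 < a * v i := by
    intro i
    have := mulVec_pos' A hA v hv0 j0 hj0 i
    rwa [hAv] at this
  have hapos : 0 < a := by nlinarith [h1 j0, hj0]
  exact ⟨hapos, fun i => by nlinarith [h1 i, hv0 i]⟩

/-- one-sided eigenvalue comparison via min-ratio -/
lemma eig_le {n : ℕ} (hn : 0 < n) (A : Matrix (Fin n) (Fin n) ℝ) (hA : ∀ i j, 0 < A i j)
    {v w : Fin n → ℝ} {a b : ℝ} (hAv : A.mulVec v = a • v) (hAw : A.mulVec w = b • w)
    (hvpos : ∀ i, 0 < v i) (hwpos : ∀ i, 0 < w i) (hapos : 0 < a) : a ≤ b := by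
  haveI : Nonempty (Fin n) := Fin.pos_iff_nonempty.mp hn
  obtain ⟨i0, _, hi0⟩ := Finset.exists_min_image Finset.univ (fun i => w i / v i)
    Finset.univ_nonempty
  set c := w i0 / v i0 with hc
  have hle : ∀ i, c * v i ≤ w i := by
    intro i
    have := hi0 i (Finset.mem_univ i)
    calc c * v i ≤ (w i / v i) * v i := by
          exact mul_le_mul_of_nonneg_right this (hvpos i).le
      _ = w i := div_mul_cancel₀ _ (hvpos i).ne'
  have hceq : c * v i0 = w i0 := div_mul_cancel₀ _ (hvpos i0).ne'
  -- (A w)_{i0} ≥ c * (A v)_{i0}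
  have key : c * (A.mulVec v i0) ≤ A.mulVec w i0 := by
    simp only [Matrix.mulVec, dotProduct, Finset.mul_sum]
    apply Finset.sum_le_sum
    intro j _
    have := hle j
    have hAij := (hA i0 j).le
    calc c * (A i0 j * v j) = A i0 j * (c * v j) := by ring
      _ ≤ A i0 j * w j := mul_le_mul_of_nonneg_left this hAij
  rw [hAv, hAw] at key
  simp only [Pi.smul_apply, smul_eq_mul] at key
  -- c * (a * v i0) ≤ b * w i0, c * v i0 = w i0
  have hwpos0 := hwpos i0
  nlinarith [key, hceq, hwpos0, hapos]

/-- If `M` is an n×n (n > 1) non-negative matrix with `M^k` strictly positive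
for some `k ≥ 1`, then any two nonzero entrywise non-negative eigenvectors of `M` are
scalar multiples of each other. -/
theorem stmt7 (n : ℕ) (hn : 1 < n) (M : Matrix (Fin n) (Fin n) ℝ)
    (h0 : ∀ i j, 0 ≤ M i j)
    (hprim : ∃ k : ℕ, 1 ≤ k ∧ ∀ i j, 0 < (M ^ k) i j)
    (v w : Fin n → ℝ) (hv : v ≠ 0) (hw : w ≠ 0)
    (hv0 : ∀ i, 0 ≤ v i) (hw0 : ∀ i, 0 ≤ w i)
    (hve : ∃ μ : ℝ, M.mulVec v = μ • v) (hwe : ∃ ν : ℝ, M.mulVec w = ν • w) :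
    ∃ c : ℝ, w = c • v := by
  obtain ⟨k, hk, hA⟩ := hprim
  obtain ⟨μ, hμ⟩ := hve
  obtain ⟨ν, hν⟩ := hwe
  have hAv : (M ^ k).mulVec v = μ ^ k • v := pow_mulVec_eig M v μ hμ k
  have hAw : (M ^ k).mulVec w = ν ^ k • w := pow_mulVec_eig M w ν hν k
  obtain ⟨hapos, hvpos⟩ := all_pos _ hA hAv hv hv0
  obtain ⟨hbpos, hwpos⟩ := all_pos _ hA hAw hw hw0
  have hn0 : 0 < n := by omega
  have hab : μ ^ k = ν ^ k :=
    le_antisymm (eig_le hn0 _ hA hAv hAw hvpos hwpos hapos)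
      (eig_le hn0 _ hA hAw hAv hwpos hvpos hbpos)
  -- min ratio argument again
  haveI : Nonempty (Fin n) := Fin.pos_iff_nonempty.mp hn0
  obtain ⟨i0, _, hi0⟩ := Finset.exists_min_image Finset.univ (fun i => w i / v i)
    Finset.univ_nonempty
  set c := w i0 / v i0 with hc
  have hle : ∀ i, c * v i ≤ w i := by
    intro i
    have := hi0 i (Finset.mem_univ i)
    calc c * v i ≤ (w i / v i) * v i :=
          mul_le_mul_of_nonneg_right this (hvpos i).le
      _ = w i := div_mul_cancel₀ _ (hvpos i).ne'
  have hceq : c * v i0 = w i0 := div_mul_cancel₀ _ (hvpos i0).ne'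
  refine ⟨c, ?_⟩
  -- u = w - c•v satisfies A u = a u, u ≥ 0, u i0 = 0 ⇒ u = 0
  set u : Fin n → ℝ := w - c • v with hu
  have hu0 : ∀ i, 0 ≤ u i := fun i => by
    simp only [hu, Pi.sub_apply, Pi.smul_apply, smul_eq_mul, sub_nonneg]
    exact hle i
  have hAu : (M ^ k).mulVec u = μ ^ k • u := by
    simp only [hu, Matrix.mulVec_sub, Matrix.mulVec_smul, hAv, hAw, ← hab, smul_sub,
      smul_comm c (μ ^ k)]
  by_contra hne
  have hune : u ≠ 0 := fun h => hne (sub_eq_zero.mp h)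
  obtain ⟨j, hj⟩ := exists_ne_zero_of_ne_zero hune hu0
  have hpos := mulVec_pos' _ hA u hu0 j hj i0
  rw [hAu] at hpos
  simp only [Pi.smul_apply, smul_eq_mul, hu, Pi.sub_apply, Pi.smul_apply, smul_eq_mul] at hpos
  nlinarith [hpos, hceq]
end

section
/- Suppose for each L in {2,…,L₀} real numbers E(L,n) are defined for n ∈ {0,…,⌊L/2⌋}, satisfying the recursion inequality E(L+1,n) ≥ min{E(L,n), E(L,n−1)} for all 0 < n < (L+1)/2 and E(L+1,0) ≥ E(L,0). If for some fixed n, E(L,n) is strictly decreasing in L for L ∈ {2n,…,L₀}, and additionally E(2n, n) < E(2n, r) for all r > n in range, then E(L₀,n) < E(L₀,r) for all r > n with r ≤ ⌊L₀/2⌋. -/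
/-- Given the interlacing recursion `E(L+1,n) ≥ min{E(L,n), E(L,n−1)}`
(together with `E(L+1,0) ≥ E(L,0)` and the top-spin clause for odd `L`), strict
decrease of `E(·,n)` in `L` on `{max(2,2n),…,L₀}`, and the base-case ordering, one gets
`E(L₀,n) < E(L₀,r)` for all `r > n` in range. -/
theorem stmt11 (L₀ n : ℕ) (E : ℕ → ℕ → ℝ)
    (hstart : max 2 (2 * n) ≤ L₀)
    (h1 : ∀ L n', 2 ≤ L → L < L₀ → 1 ≤ n' → n' ≤ L / 2 →
      min (E L n') (E L (n' - 1)) ≤ E (L + 1) n')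
    (h1' : ∀ L, 2 ≤ L → L < L₀ → L % 2 = 1 → E L (L / 2) ≤ E (L + 1) ((L + 1) / 2))
    (h0 : ∀ L, 2 ≤ L → L < L₀ → E L 0 ≤ E (L + 1) 0)
    (h2 : ∀ L, max 2 (2 * n) ≤ L → L < L₀ → E (L + 1) n < E L n)
    (h3 : ∀ r, n < r → r ≤ (max 2 (2 * n)) / 2 →
      E (max 2 (2 * n)) n < E (max 2 (2 * n)) r) :
    ∀ r, n < r → r ≤ L₀ / 2 → E L₀ n < E L₀ r := by
  have key : ∀ L, max 2 (2 * n) ≤ L → L ≤ L₀ →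
      ∀ r, n < r → r ≤ L / 2 → E L n < E L r := by
    intro L hL
    induction L, hL using Nat.le_induction with
    | base => intro _ r hr1 hr2; exact h3 r hr1 hr2
    | succ L hLbL ih =>
      intro hL1 r hnr hr2
      have hLlt : L < L₀ := by omega
      have hEn : E (L + 1) n < E L n := h2 L hLbL hLlt
      have h2L : 2 ≤ L := le_trans (le_max_left _ _) hLbL
      have ihL := ih (le_of_lt hLlt)
      have hprev : E L n ≤ E L (r - 1) ∧ (r - 1 ≤ L / 2 → True) := by
        constructor
        · by_cases h : r - 1 = n
          · rw [h]
          · exact le_of_lt (ihL (r - 1) (by omega) (by omega))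
        · intro _; trivial
      by_cases hcase : r ≤ L / 2
      · have hmin := h1 L r h2L hLlt (by omega) hcase
        have hEr : E L n < E L r := ihL r hnr hcase
        have hEr1 : E L n ≤ E L (r - 1) := by
          by_cases h : r - 1 = n
          · rw [h]
          · exact le_of_lt (ihL (r - 1) (by omega) (by omega))
        calc E (L + 1) n < E L n := hEn
          _ ≤ min (E L r) (E L (r - 1)) := le_min (le_of_lt hEr) hEr1
          _ ≤ E (L + 1) r := hmin
      · have hodd : L % 2 = 1 := by omega
        have hr : r = (L + 1) / 2 := by omega
        have hdiv : L / 2 = r - 1 := by omega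
        have hstep := h1' L h2L hLlt hodd
        rw [hdiv, ← hr] at hstep
        have hEr1 : E L n ≤ E L (r - 1) := by
          by_cases h : r - 1 = n
          · rw [h]
          · exact le_of_lt (ihL (r - 1) (by omega) (by omega))
        calc E (L + 1) n < E L n := hEn
          _ ≤ E L (r - 1) := hEr1
          _ ≤ E (L + 1) r := hstep
  exact key L₀ hstart le_rfl
end
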